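/- arXiv:1812.01290 — 4 statements merged into one kernel-verified Lean document; each statement's English description precedes it below -/
import Mathlib

section
/- Let f, g : ℝ² → ℝ be C¹ functions satisfying f_x = g_y, and define A_n(x,y), B_n(x,y) as the polynomials A_n = (1/(2(n+1)!))[(f+ig)^{n+1}+(f−ig)^{n+1}], B_n = (1/(2i(n+1)!))[(f+ig)^{n+1}−(f−ig)^{n+1}] evaluated at (f(x,y), g(x,y)). Then for all n ≥ 0: A_n·(f_y + g_x) = (A_{n+1})_y + (B_{n+1})_x. -/
/-!
Put `z = f + i g`. Then `A_n` and `B_n` evaluated along `(f, g)` are the real and imaginary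
parts of `z^(n+1)/(n+1)!`, and the chain rule gives `∂_v (z^(n+2)/(n+2)!) = w ∂_v z` with
`w = z^(n+1)/(n+1)!`, so `Re w = A_n`. Hence
`(A_{n+1})_y + (B_{n+1})_x = Re (w z_y) + Im (w z_x) = Re w (f_y + g_x) + Im w (f_x - g_y)`,
and the last term vanishes because `f_x = g_y`.
-/

noncomputable def An (n : ℕ) (a b : ℝ) : ℝ :=
  ((((a : ℂ) + Complex.I * b) ^ (n + 1) + ((a : ℂ) - Complex.I * b) ^ (n + 1)) /
    (2 * ((n + 1).factorial : ℂ))).re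

noncomputable def Bn (n : ℕ) (a b : ℝ) : ℝ :=
  ((((a : ℂ) + Complex.I * b) ^ (n + 1) - ((a : ℂ) - Complex.I * b) ^ (n + 1)) /
    (2 * Complex.I * ((n + 1).factorial : ℂ))).re

open Complex ComplexConjugate

noncomputable def expTerm (n : ℕ) (w : ℂ) : ℂ := w ^ n / n.factorial

theorem hasDerivAt_expTerm_succ (n : ℕ) (w : ℂ) :
    HasDerivAt (expTerm (n + 1)) (expTerm n w) w := by
  refine ((hasDerivAt_pow (n + 1) w).div_const _).congr_deriv ?_
  rw [expTerm, Nat.factorial_succ, Nat.add_sub_cancel]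
  push_cast
  field_simp

theorem ofReal_sub_I_mul_eq_conj (a b : ℝ) : (a : ℂ) - I * b = conj ((a : ℂ) + I * b) := by
  simp [Complex.ext_iff]

theorem An_eq_re_expTerm (n : ℕ) (a b : ℝ) : An n a b = (expTerm (n + 1) (a + I * b)).re := by
  set w := ((a : ℂ) + I * b) ^ (n + 1)
  have h : (2 * w.re : ℝ) / (2 * ((n + 1).factorial : ℂ)) =
      ((w.re / (n + 1).factorial : ℝ) : ℂ) := by
    push_cast
    field_simp
  rw [An, expTerm, ofReal_sub_I_mul_eq_conj, ← map_pow, add_conj, h, ofReal_re, div_natCast_re]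

theorem Bn_eq_im_expTerm (n : ℕ) (a b : ℝ) : Bn n a b = (expTerm (n + 1) (a + I * b)).im := by
  set w := ((a : ℂ) + I * b) ^ (n + 1)
  have h : (2 * w.im : ℝ) * I / (2 * I * ((n + 1).factorial : ℂ)) =
      ((w.im / (n + 1).factorial : ℝ) : ℂ) := by
    push_cast
    field_simp
  rw [Bn, expTerm, ofReal_sub_I_mul_eq_conj, ← map_pow, sub_conj, h, ofReal_re, div_natCast_im]

section Derivatives

variable {E : Type*} [NormedAddCommGroup E] [NormedSpace ℝ E] {f g : E → ℝ} {p : E}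

theorem HasFDerivAt.ofReal_add_I_mul {f' g' : E →L[ℝ] ℝ} (hf : HasFDerivAt f f' p)
    (hg : HasFDerivAt g g' p) :
    HasFDerivAt (fun q => (f q : ℂ) + I * g q) (ofRealCLM.comp f' + I • ofRealCLM.comp g') p :=
  (ofRealCLM.hasFDerivAt.comp p hf).add ((ofRealCLM.hasFDerivAt.comp p hg).const_mul I)

theorem HasFDerivAt.expTerm_succ {z : E → ℂ} {z' : E →L[ℝ] ℂ} (hz : HasFDerivAt z z' p)
    (n : ℕ) : HasFDerivAt (fun q => expTerm (n + 1) (z q)) (expTerm n (z p) • z') p :=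
  (hasDerivAt_expTerm_succ n (z p)).comp_hasFDerivAt p hz

theorem fderiv_re_expTerm_succ_apply (hf : DifferentiableAt ℝ f p) (hg : DifferentiableAt ℝ g p)
    (n : ℕ) (v : E) :
    fderiv ℝ (fun q => (expTerm (n + 1) (f q + I * g q)).re) p v =
      (expTerm n (f p + I * g p) * (fderiv ℝ f p v + I * fderiv ℝ g p v)).re := by
  have h : HasFDerivAt (fun q => (expTerm (n + 1) (f q + I * g q)).re) _ p :=
    reCLM.hasFDerivAt.comp p ((hf.hasFDerivAt.ofReal_add_I_mul hg.hasFDerivAt).expTerm_succ n)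
  rw [h.fderiv]
  rfl

theorem fderiv_im_expTerm_succ_apply (hf : DifferentiableAt ℝ f p) (hg : DifferentiableAt ℝ g p)
    (n : ℕ) (v : E) :
    fderiv ℝ (fun q => (expTerm (n + 1) (f q + I * g q)).im) p v =
      (expTerm n (f p + I * g p) * (fderiv ℝ f p v + I * fderiv ℝ g p v)).im := by
  have h : HasFDerivAt (fun q => (expTerm (n + 1) (f q + I * g q)).im) _ p :=
    imCLM.hasFDerivAt.comp p ((hf.hasFDerivAt.ofReal_add_I_mul hg.hasFDerivAt).expTerm_succ n)
  rw [h.fderiv]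
  rfl

end Derivatives

theorem re_mul_add_eq_re_mul_add_im_mul (w : ℂ) {fx fy gx gy : ℝ} (h : fx = gy) :
    w.re * (fy + gx) = (w * (fy + I * gy)).re + (w * (fx + I * gx)).im := by
  simp only [mul_re, mul_im, add_re, add_im, ofReal_re, ofReal_im, I_re, I_im, h]
  ring

/-- For C¹ functions with `f_x = g_y`:
`A_n·(f_y + g_x) = (A_{n+1})_y + (B_{n+1})_x`. -/
theorem stmt4 (f g : ℝ × ℝ → ℝ) (hf : ContDiff ℝ 1 f) (hg : ContDiff ℝ 1 g)
    (hfg : ∀ p : ℝ × ℝ, fderiv ℝ f p (1, 0) = fderiv ℝ g p (0, 1)) :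
    ∀ (n : ℕ) (p : ℝ × ℝ),
      An n (f p) (g p) * (fderiv ℝ f p (0, 1) + fderiv ℝ g p (1, 0)) =
        fderiv ℝ (fun q => An (n + 1) (f q) (g q)) p (0, 1) +
          fderiv ℝ (fun q => Bn (n + 1) (f q) (g q)) p (1, 0) := by
  intro n p
  have hfp := hf.differentiable one_ne_zero p
  have hgp := hg.differentiable one_ne_zero p
  simp only [An_eq_re_expTerm, Bn_eq_im_expTerm]
  rw [fderiv_re_expTerm_succ_apply hfp hgp, fderiv_im_expTerm_succ_apply hfp hgp]
  exact re_mul_add_eq_re_mul_add_im_mul _ (hfg p)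
end

section
/- Let f, g : ℝ² → ℝ be C¹ functions satisfying f_x = g_y, and let A_n, B_n be the polynomials in f, g defined by A_n = (1/(2(n+1)!))[(f+ig)^{n+1}+(f−ig)^{n+1}], B_n = (1/(2i(n+1)!))[(f+ig)^{n+1}−(f−ig)^{n+1}]. Then for all n ≥ 0: B_n·(f_y + g_x) = −(A_{n+1})_x + (B_{n+1})_y. -/
open Complex ComplexConjugate Nat

lemma conj_ofReal_add_I_mul (a b : ℝ) : conj ((a : ℂ) + I * b) = a - I * b := by
  simp [sub_eq_add_neg]

lemma An_eq_re (n : ℕ) (a b : ℝ) :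
    An n a b = (((a : ℂ) + I * b) ^ (n + 1) / (n + 1)!).re := by
  rw [An, ← conj_ofReal_add_I_mul, ← map_pow]
  set z := ((a : ℂ) + I * b) ^ (n + 1)
  rw [add_conj, mul_comm (2 : ℂ), ← div_div, div_ofNat_re, div_natCast_re, div_natCast_re,
    ofReal_re]
  ring

lemma Bn_eq_im (n : ℕ) (a b : ℝ) :
    Bn n a b = (((a : ℂ) + I * b) ^ (n + 1) / (n + 1)!).im := by
  rw [Bn, ← conj_ofReal_add_I_mul, ← map_pow]
  set z := ((a : ℂ) + I * b) ^ (n + 1)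
  have hz : ((2 * z.im : ℝ) : ℂ) * I / (2 * I * (n + 1)!) = ((z.im / (n + 1)! : ℝ) : ℂ) := by
    push_cast
    field_simp
  rw [sub_conj, hz, ofReal_re, div_natCast_im]

section

variable {E : Type*} [NormedAddCommGroup E] [NormedSpace ℝ E]

theorem HasFDerivAt.pow_succ_div_factorial {w : E → ℂ} {w' : E →L[ℝ] ℂ} {p : E}
    (hw : HasFDerivAt w w' p) (n : ℕ) :
    HasFDerivAt (fun q => w q ^ (n + 1) / (n + 1)!) ((w p ^ n / n !) • w') p := by
  have h : HasDerivAt (fun z : ℂ => z ^ (n + 1) / (n + 1)!) (w p ^ n / n !) (w p) := by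
    have hn : ((n + 1 : ℕ) : ℂ) ≠ 0 := Nat.cast_ne_zero.mpr n.succ_ne_zero
    have := (hasDerivAt_pow (n + 1) (w p)).div_const ((n + 1)! : ℂ)
    rw [Nat.factorial_succ, Nat.cast_mul, mul_div_mul_left _ _ hn, Nat.add_sub_cancel] at this
    rwa [Nat.factorial_succ, Nat.cast_mul]
  exact h.comp_hasFDerivAt p hw

theorem HasFDerivAt.fderiv_re_apply {u : E → ℂ} {u' : E →L[ℝ] ℂ} {p : E}
    (hu : HasFDerivAt u u' p) (v : E) : fderiv ℝ (fun q => (u q).re) p v = (u' v).re := by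
  have h : HasFDerivAt (fun q => (u q).re) (reCLM.comp u') p := reCLM.hasFDerivAt.comp p hu
  rw [h.fderiv]
  rfl

theorem HasFDerivAt.fderiv_im_apply {u : E → ℂ} {u' : E →L[ℝ] ℂ} {p : E}
    (hu : HasFDerivAt u u' p) (v : E) : fderiv ℝ (fun q => (u q).im) p v = (u' v).im := by
  have h : HasFDerivAt (fun q => (u q).im) (imCLM.comp u') p := imCLM.hasFDerivAt.comp p hu
  rw [h.fderiv]
  rfl

end

/-- For C¹ functions with `f_x = g_y`:
`B_n·(f_y + g_x) = −(A_{n+1})_x + (B_{n+1})_y`. -/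
theorem stmt5 (f g : ℝ × ℝ → ℝ) (hf : ContDiff ℝ 1 f) (hg : ContDiff ℝ 1 g)
    (hfg : ∀ p : ℝ × ℝ, fderiv ℝ f p (1, 0) = fderiv ℝ g p (0, 1)) :
    ∀ (n : ℕ) (p : ℝ × ℝ),
      Bn n (f p) (g p) * (fderiv ℝ f p (0, 1) + fderiv ℝ g p (1, 0)) =
        -fderiv ℝ (fun q => An (n + 1) (f q) (g q)) p (1, 0) +
          fderiv ℝ (fun q => Bn (n + 1) (f q) (g q)) p (0, 1) := by
  intro n p
  have hw : HasFDerivAt (fun q => (f q : ℂ) + I * g q)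
      (ofRealCLM.comp (fderiv ℝ f p) + I • ofRealCLM.comp (fderiv ℝ g p)) p :=
    (ofRealCLM.hasFDerivAt.comp p (hf.differentiable one_ne_zero p).hasFDerivAt).add
      ((ofRealCLM.hasFDerivAt.comp p (hg.differentiable one_ne_zero p).hasFDerivAt).const_mul I)
  have hpow := hw.pow_succ_div_factorial (n + 1)
  simp_rw [An_eq_re, Bn_eq_im]
  rw [hpow.fderiv_re_apply, hpow.fderiv_im_apply]
  simp only [smul_apply, add_apply,
    ContinuousLinearMap.comp_apply, ofRealCLM_apply, smul_eq_mul, mul_add, add_re, add_im,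
    mul_re, mul_im, ofReal_re, ofReal_im, I_re, I_im]
  rw [hfg p]
  ring
end

section
/- Let f, g : ℝ² → ℝ be C² with f_x = g_y. Then ((K₁ + g² − f²)(f_y+g_x) + 2fg(g_y − f_x))_x + ((K₂ − 2fg)(f_y+g_x) + (f² − g²)(f_x − g_y))_y = Δ(K₁g + K₂f + (1/3)g³ − gf²). -/
/-- The divergence-form identity preceding equation (3.22):
`((K₁+g²−f²)(f_y+g_x) + 2fg(g_y−f_x))_x + ((K₂−2fg)(f_y+g_x) + (f²−g²)(f_x−g_y))_y
  = Δ(K₁g + K₂f + g³/3 − gf²)`. -/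
theorem stmt16 (f g : ℝ × ℝ → ℝ) (hf : ContDiff ℝ 2 f) (hg : ContDiff ℝ 2 g)
    (hfg : ∀ p : ℝ × ℝ, fderiv ℝ f p (1, 0) = fderiv ℝ g p (0, 1)) (K₁ K₂ : ℝ) :
    ∀ p : ℝ × ℝ,
      fderiv ℝ (fun q =>
          (K₁ + g q ^ 2 - f q ^ 2) * (fderiv ℝ f q (0, 1) + fderiv ℝ g q (1, 0)) +
            2 * f q * g q * (fderiv ℝ g q (0, 1) - fderiv ℝ f q (1, 0))) p (1, 0) +
        fderiv ℝ (fun q =>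
          (K₂ - 2 * f q * g q) * (fderiv ℝ f q (0, 1) + fderiv ℝ g q (1, 0)) +
            (f q ^ 2 - g q ^ 2) * (fderiv ℝ f q (1, 0) - fderiv ℝ g q (0, 1))) p (0, 1) =
      fderiv ℝ (fun q => fderiv ℝ (fun r =>
          K₁ * g r + K₂ * f r + (1 / 3) * g r ^ 3 - g r * f r ^ 2) q (1, 0)) p (1, 0) +
        fderiv ℝ (fun q => fderiv ℝ (fun r =>
          K₁ * g r + K₂ * f r + (1 / 3) * g r ^ 3 - g r * f r ^ 2) q (0, 1)) p (0, 1) := by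
  have hf1 : ContDiff ℝ 1 (fderiv ℝ f) := hf.fderiv_right (by norm_num)
  have hg1 : ContDiff ℝ 1 (fderiv ℝ g) := hg.fderiv_right (by norm_num)
  have hfd : Differentiable ℝ f := hf.differentiable (by norm_num)
  have hgd : Differentiable ℝ g := hg.differentiable (by norm_num)
  intro p
  have hF : HasFDerivAt (fderiv ℝ f) (fderiv ℝ (fderiv ℝ f) p) p :=
    ((hf1.differentiable (by norm_num)) p).hasFDerivAt
  have hG : HasFDerivAt (fderiv ℝ g) (fderiv ℝ (fderiv ℝ g) p) p :=
    ((hg1.differentiable (by norm_num)) p).hasFDerivAt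
  set F2 := fderiv ℝ (fderiv ℝ f) p with hF2
  set G2 := fderiv ℝ (fderiv ℝ g) p with hG2
  have hfv : ∀ v : ℝ × ℝ, HasFDerivAt (fun q => fderiv ℝ f q v)
      ((ContinuousLinearMap.apply ℝ ℝ v).comp F2) p :=
    fun v => (ContinuousLinearMap.apply ℝ ℝ v).hasFDerivAt.comp p hF
  have hgv : ∀ v : ℝ × ℝ, HasFDerivAt (fun q => fderiv ℝ g q v)
      ((ContinuousLinearMap.apply ℝ ℝ v).comp G2) p :=
    fun v => (ContinuousLinearMap.apply ℝ ℝ v).hasFDerivAt.comp p hG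
  have hfp : HasFDerivAt f (fderiv ℝ f p) p := (hfd p).hasFDerivAt
  have hgp : HasFDerivAt g (fderiv ℝ g p) p := (hgd p).hasFDerivAt
  -- cross-derivative constraint from f_x = g_y
  have hC : ((ContinuousLinearMap.apply ℝ ℝ ((1:ℝ),(0:ℝ))).comp F2)
      = ((ContinuousLinearMap.apply ℝ ℝ ((0:ℝ),(1:ℝ))).comp G2) := by
    have h1 := hfv (1, 0)
    have h2 := hgv (0, 1)
    have he : (fun q => fderiv ℝ f q (1, 0)) = fun q => fderiv ℝ g q (0, 1) :=
      funext hfg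
    rw [he] at h1
    exact h1.unique h2
  have hC1 : F2 (1, 0) (1, 0) = G2 (1, 0) (0, 1) := congrArg (fun L => L (1, 0)) hC
  have hC2 : F2 (0, 1) (1, 0) = G2 (0, 1) (0, 1) := congrArg (fun L => L (0, 1)) hC
  have hsymF : F2 (1, 0) (0, 1) = F2 (0, 1) (1, 0) :=
    second_derivative_symmetric (fun y => (hfd y).hasFDerivAt) hF _ _
  have hsymG : G2 (1, 0) (0, 1) = G2 (0, 1) (1, 0) :=
    second_derivative_symmetric (fun y => (hgd y).hasFDerivAt) hG _ _
  have hval := hfg p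
  have hsq : ∀ (u : ℝ × ℝ → ℝ), Differentiable ℝ u → ∀ q : ℝ × ℝ,
      HasFDerivAt (fun r => u r ^ 2) ((2 * u q) • fderiv ℝ u q) q := by
    intro u hu q
    have h := (hu q).hasFDerivAt.mul (hu q).hasFDerivAt
    have e : ((2 : ℝ) * u q) • fderiv ℝ u q = u q • fderiv ℝ u q + u q • fderiv ℝ u q := by
      rw [two_mul, add_smul]
    rw [e]
    simpa [pow_two, Pi.mul_def] using h
  have hcube : ∀ (u : ℝ × ℝ → ℝ), Differentiable ℝ u → ∀ q : ℝ × ℝ,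
      HasFDerivAt (fun r => u r ^ 3) ((3 * u q ^ 2) • fderiv ℝ u q) q := by
    intro u hu q
    have h := (hsq u hu q).mul (hu q).hasFDerivAt
    have e : ((3 : ℝ) * u q ^ 2) • fderiv ℝ u q
        = u q ^ 2 • fderiv ℝ u q + u q • (2 * u q) • fderiv ℝ u q := by
      rw [smul_smul, ← add_smul]; ring_nf
    rw [e]
    simpa [pow_succ, pow_two, mul_assoc, Pi.mul_def] using h
  -- derivative of the cubic potential
  have hh : ∀ q : ℝ × ℝ, HasFDerivAt
      (fun r => K₁ * g r + K₂ * f r + (1 / 3) * g r ^ 3 - g r * f r ^ 2)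
      ((K₁ • fderiv ℝ g q + K₂ • fderiv ℝ f q +
        (1 / 3 : ℝ) • ((3 * g q ^ 2) • fderiv ℝ g q)) -
        (g q • ((2 * f q) • fderiv ℝ f q) + f q ^ 2 • fderiv ℝ g q)) q := fun q =>
    ((((hgd q).hasFDerivAt.const_mul K₁).add ((hfd q).hasFDerivAt.const_mul K₂)).add
      ((hcube g hgd q).const_mul (1 / 3))).sub
      ((hgd q).hasFDerivAt.mul (hsq f hfd q))
  have hrw : ∀ v : ℝ × ℝ, (fun q => fderiv ℝ (fun r =>
      K₁ * g r + K₂ * f r + (1 / 3) * g r ^ 3 - g r * f r ^ 2) q v)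
      = fun q => K₁ * fderiv ℝ g q v + K₂ * fderiv ℝ f q v +
        (1 / 3) * ((3 * g q ^ 2) * fderiv ℝ g q v) -
        (g q * ((2 * f q) * fderiv ℝ f q v) + f q ^ 2 * fderiv ℝ g q v) := by
    intro v
    funext q
    rw [(hh q).fderiv]
    simp [smul_eq_mul]
  rw [hrw (1, 0), hrw (0, 1)]
  -- left-hand side derivatives
  have hA := ((((hasFDerivAt_const K₁ p).add (hsq g hgd p)).sub (hsq f hfd p)).mul
      ((hfv (0, 1)).add (hgv (1, 0)))).add
      (((hfp.const_mul 2).mul hgp).mul ((hgv (0, 1)).sub (hfv (1, 0))))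
  have hB := (((hasFDerivAt_const K₂ p).sub ((hfp.const_mul 2).mul hgp)).mul
      ((hfv (0, 1)).add (hgv (1, 0)))).add
      (((hsq f hfd p).sub (hsq g hgd p)).mul ((hfv (1, 0)).sub (hgv (0, 1))))
  -- right-hand side derivatives
  have hR : ∀ v : ℝ × ℝ, _ := fun v : ℝ × ℝ =>
    ((((hgv v).const_mul K₁).add ((hfv v).const_mul K₂)).add
      ((((hsq g hgd p).const_mul 3).mul (hgv v)).const_mul (1 / 3))).sub
      ((hgp.mul ((hfp.const_mul 2).mul (hfv v))).add ((hsq f hfd p).mul (hgv v)))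
  simp only [Pi.add_def, Pi.sub_def, Pi.mul_def] at hA hB hR
  rw [hA.fderiv, hB.fderiv, (hR (1, 0)).fderiv, (hR (0, 1)).fderiv]
  simp only [ContinuousLinearMap.add_apply, ContinuousLinearMap.sub_apply,
    ContinuousLinearMap.smul_apply, ContinuousLinearMap.coe_comp', Function.comp_apply,
    ContinuousLinearMap.apply_apply, ContinuousLinearMap.zero_apply, smul_eq_mul]
  rw [hsymF, hsymG, hC1, hC2, hval]
  linear_combination -K₂ * hsymG
end

section
/- Let f, g : ℝ² → ℝ be C² doubly periodic functions with f_x = g_y, and suppose w : ℝ² → ℝ is C² doubly periodic with Δw = 0 arising as w = K₁g + K₂f + (1/3)g³ − gf² − K₃ for constants K₁, K₂, K₃. If w is harmonic and doubly periodic then w ≡ const; in particular K₁g + K₂f + (1/3)g³ − gf² is constant on ℝ². -/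
/-!
Transported to `ℂ`, a doubly periodic C² function with vanishing Laplacian is harmonic, and it is
bounded because its range is the image of one compact period cell. Liouville's theorem for
harmonic functions on the plane makes it constant; apply this to `w`, which inherits periodicity
from `f` and `g`.
-/

open Set InnerProductSpace Complex Laplacian

theorem iteratedFDeriv_two_apply_eq_fderiv_fderiv_apply {𝕜 E F : Type*}
    [NontriviallyNormedField 𝕜] [NormedAddCommGroup E] [NormedSpace 𝕜 E]
    [NormedAddCommGroup F] [NormedSpace 𝕜 F]
    {f : E → F} (hf : ContDiff 𝕜 2 f) (x v w : E) :
    iteratedFDeriv 𝕜 2 f x ![w, v] = fderiv 𝕜 (fun y => fderiv 𝕜 f y v) x w := by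
  rw [iteratedFDeriv_two_apply, fderiv_clm_apply]
  · simp
  · exact ((hf.fderiv_right (m := 1) le_rfl).differentiable one_ne_zero) x
  · exact differentiableAt_const v

theorem isCompact_range_of_periodic {α : Type*} [TopologicalSpace α] {φ : ℝ × ℝ → α}
    (hφ : Continuous φ) {c₁ c₂ : ℝ} (hc₁ : 0 < c₁) (hc₂ : 0 < c₂)
    (hp₁ : ∀ x y, φ (x + c₁, y) = φ (x, y)) (hp₂ : ∀ x y, φ (x, y + c₂) = φ (x, y)) :
    IsCompact (range φ) := by
  have hsub : range φ ⊆ φ '' (Icc 0 c₁ ×ˢ Icc 0 c₂) := by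
    rintro _ ⟨⟨x, y⟩, rfl⟩
    obtain ⟨x', hx', hx⟩ := Function.Periodic.exists_mem_Ico₀ (f := fun x => φ (x, y))
      (fun x => hp₁ x y) hc₁ x
    obtain ⟨y', hy', hy⟩ := Function.Periodic.exists_mem_Ico₀ (f := fun y => φ (x', y))
      (fun y => hp₂ x' y) hc₂ y
    exact ⟨(x', y'), ⟨Ico_subset_Icc_self hx', Ico_subset_Icc_self hy'⟩, (hx.trans hy).symm⟩
  rw [hsub.antisymm (image_subset_range _ _)]
  exact (isCompact_Icc.prod isCompact_Icc).image hφ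

section ComplexPlane

variable {F : Type*} [NormedAddCommGroup F] [NormedSpace ℝ F] {φ : ℝ × ℝ → F}

theorem laplacian_comp_equivRealProdCLM (hφ : ContDiff ℝ 2 φ) (z : ℂ) :
    Δ (φ ∘ equivRealProdCLM) z =
      fderiv ℝ (fun q => fderiv ℝ φ q (1, 0)) (equivRealProdCLM z) (1, 0) +
        fderiv ℝ (fun q => fderiv ℝ φ q (0, 1)) (equivRealProdCLM z) (0, 1) := by
  have h := (equivRealProdCLM : ℂ →L[ℝ] ℝ × ℝ).iteratedFDeriv_comp_right hφ z le_rfl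
  rw [ContinuousLinearEquiv.coe_coe] at h
  rw [laplacian_eq_iteratedFDeriv_complexPlane]
  simp only [h, ContinuousMultilinearMap.compContinuousLinearMap_apply,
    ← iteratedFDeriv_two_apply_eq_fderiv_fderiv_apply hφ]
  congr 2 <;> ext i <;> fin_cases i <;> simp

theorem harmonicOnNhd_comp_equivRealProdCLM (hφ : ContDiff ℝ 2 φ)
    (hΔ : ∀ p, fderiv ℝ (fun q => fderiv ℝ φ q (1, 0)) p (1, 0) +
      fderiv ℝ (fun q => fderiv ℝ φ q (0, 1)) p (0, 1) = 0) :
    HarmonicOnNhd (φ ∘ equivRealProdCLM) univ := fun _ _ =>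
  ⟨(hφ.comp equivRealProdCLM.contDiff).contDiffAt,
    Filter.Eventually.of_forall fun z => (laplacian_comp_equivRealProdCLM hφ z).trans (hΔ _)⟩

theorem eq_of_periodic_of_laplacian_eq_zero (hφ : ContDiff ℝ 2 φ) {c₁ c₂ : ℝ}
    (hc₁ : 0 < c₁) (hc₂ : 0 < c₂)
    (hp₁ : ∀ x y, φ (x + c₁, y) = φ (x, y)) (hp₂ : ∀ x y, φ (x, y + c₂) = φ (x, y))
    (hΔ : ∀ p, fderiv ℝ (fun q => fderiv ℝ φ q (1, 0)) p (1, 0) +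
      fderiv ℝ (fun q => fderiv ℝ φ q (0, 1)) p (0, 1) = 0) (p q : ℝ × ℝ) :
    φ p = φ q := by
  have hbdd : Bornology.IsBounded (range (φ ∘ equivRealProdCLM)) := by
    rw [range_comp, equivRealProdCLM.surjective.range_eq, image_univ]
    exact (isCompact_range_of_periodic hφ.continuous hc₁ hc₂ hp₁ hp₂).isBounded
  simpa using bounded_harmonic_on_complex_plane_is_constant _
    (harmonicOnNhd_comp_equivRealProdCLM hφ hΔ) hbdd (equivRealProdCLM.symm p)
    (equivRealProdCLM.symm q)

end ComplexPlane

theorem stmt17_general (f g : ℝ × ℝ → ℝ) (hf : ContDiff ℝ 2 f) (hg : ContDiff ℝ 2 g)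
    (hper1f : ∀ x y : ℝ, f (x + 1, y) = f (x, y))
    (hper2f : ∀ x y : ℝ, f (x, y + 1) = f (x, y))
    (hper1g : ∀ x y : ℝ, g (x + 1, y) = g (x, y))
    (hper2g : ∀ x y : ℝ, g (x, y + 1) = g (x, y))
    (K₁ K₂ K₃ : ℝ)
    (w : ℝ × ℝ → ℝ)
    (hw : ∀ p : ℝ × ℝ,
      w p = K₁ * g p + K₂ * f p + (1 / 3) * g p ^ 3 - g p * f p ^ 2 - K₃)
    (hharm : ∀ p : ℝ × ℝ,
      fderiv ℝ (fun q => fderiv ℝ w q (1, 0)) p (1, 0) +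
        fderiv ℝ (fun q => fderiv ℝ w q (0, 1)) p (0, 1) = 0) :
    ∃ c : ℝ, ∀ p : ℝ × ℝ,
      K₁ * g p + K₂ * f p + (1 / 3) * g p ^ 3 - g p * f p ^ 2 = c := by
  have hwC : ContDiff ℝ 2 w := by
    rw [funext hw]
    fun_prop
  have hwp₁ (x y : ℝ) : w (x + 1, y) = w (x, y) := by rw [hw, hw, hper1f, hper1g]
  have hwp₂ (x y : ℝ) : w (x, y + 1) = w (x, y) := by rw [hw, hw, hper2f, hper2g]
  refine ⟨w 0 + K₃, fun p => ?_⟩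
  rw [← eq_of_periodic_of_laplacian_eq_zero hwC one_pos one_pos hwp₁ hwp₂ hharm p 0, hw]
  ring

/-- If `w = K₁g + K₂f + g³/3 − gf² − K₃` is harmonic and doubly periodic, then it is
constant; in particular `K₁g + K₂f + g³/3 − gf²` is constant on ℝ². -/
theorem stmt17 (f g : ℝ × ℝ → ℝ) (hf : ContDiff ℝ 2 f) (hg : ContDiff ℝ 2 g)
    (hper1f : ∀ x y : ℝ, f (x + 1, y) = f (x, y))
    (hper2f : ∀ x y : ℝ, f (x, y + 1) = f (x, y))
    (hper1g : ∀ x y : ℝ, g (x + 1, y) = g (x, y))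
    (hper2g : ∀ x y : ℝ, g (x, y + 1) = g (x, y))
    (hfg : ∀ p : ℝ × ℝ, fderiv ℝ f p (1, 0) = fderiv ℝ g p (0, 1)) (K₁ K₂ K₃ : ℝ)
    (w : ℝ × ℝ → ℝ)
    (hw : ∀ p : ℝ × ℝ,
      w p = K₁ * g p + K₂ * f p + (1 / 3) * g p ^ 3 - g p * f p ^ 2 - K₃)
    (hharm : ∀ p : ℝ × ℝ,
      fderiv ℝ (fun q => fderiv ℝ w q (1, 0)) p (1, 0) +
        fderiv ℝ (fun q => fderiv ℝ w q (0, 1)) p (0, 1) = 0) :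
    ∃ c : ℝ, ∀ p : ℝ × ℝ,
      K₁ * g p + K₂ * f p + (1 / 3) * g p ^ 3 - g p * f p ^ 2 = c :=
  stmt17_general f g hf hg hper1f hper2f hper1g hper2g K₁ K₂ K₃ w hw hharm
end
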